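/- Let γ > 0 and let ψ ∈ L²(ℝ, ℂ) be such that x ↦ x·ψ(x) is also in L²(ℝ, ℂ). Then 𝔅_γψ is complex-differentiable on ℂ and for every z ∈ ℂ, (d/dz)(𝔅_γψ)(z) = −(4/γ²)·z·𝔅_γψ(z) + (2√2/γ²)·𝔅_γ[x ↦ x·ψ(x)](z). -/

import Mathlib

open MeasureTheory Complex

/-- The RBF Segal–Bargmann transform
`𝔅_γψ(z) = (2/(πγ²))^{1/4} ∫_ℝ exp(−(x − √2 z)²/γ²) ψ(x) dx`. -/
noncomputable def rbfSB (γ : ℝ) (ψ : ℝ → ℂ) (z : ℂ) : ℂ :=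
  (((2 / (Real.pi * γ ^ 2)) ^ ((1 : ℝ) / 4) : ℝ) : ℂ) *
    ∫ x : ℝ, Complex.exp (-((x : ℂ) - (Real.sqrt 2 : ℂ) * z) ^ 2 / (γ : ℂ) ^ 2) * ψ x

/-!
Differentiate under the integral sign. The kernel `k(z, x) = exp(-(x - s z)² / c)` is entire in
`z` with `∂_z k = k · 2s(x - s z)/c`, and for `z` within distance `1` of `z₀` its modulus is at
most a constant times the fixed Gaussian `exp(-(x - s Re z₀)² / 2c)`. Gaussians are in `L²`, so
by Cauchy–Schwarz the derivative of the integrand is dominated by an integrable function as soon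
as `ψ` and `x ψ` are in `L²`. The derivative is `(2s/c) ∫ k x ψ - (2s²/c) z ∫ k ψ`, and
`s = √2`, `c = γ²` give `2s²/c = 4/γ²`.
-/

lemma memLp_two_exp_neg_sq_div {b : ℝ} (hb : 0 < b) (a : ℝ) :
    MemLp (fun x : ℝ => Real.exp (-(x - a) ^ 2 / b)) 2 volume := by
  rw [memLp_two_iff_integrable_sq (by fun_prop)]
  refine ((integrable_exp_neg_mul_sq (by positivity : 0 < 2 / b)).comp_sub_right a).congr
    (.of_forall fun x => ?_)
  simp only [← Real.exp_nat_mul]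
  ring_nf

lemma norm_cexp_neg_sq_div (c s : ℝ) (z : ℂ) (x : ℝ) :
    ‖cexp (-((x : ℂ) - s * z) ^ 2 / c)‖ = Real.exp (((s * z.im) ^ 2 - (x - s * z.re) ^ 2) / c) := by
  rw [Complex.norm_exp, Complex.div_ofReal_re]
  congr 2
  simp [sq]

lemma norm_cexp_neg_sq_div_le {c : ℝ} (hc : 0 < c) (s : ℝ) {z₀ w : ℂ} (hw : ‖w - z₀‖ ≤ 1)
    (x : ℝ) :
    ‖cexp (-((x : ℂ) - s * w) ^ 2 / c)‖ ≤
      Real.exp (s ^ 2 * (1 + (‖z₀‖ + 1) ^ 2) / c) * Real.exp (-(x - s * z₀.re) ^ 2 / (2 * c)) := by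
  rw [norm_cexp_neg_sq_div, ← Real.exp_add, Real.exp_le_exp]
  have hre : (w.re - z₀.re) ^ 2 ≤ 1 := by
    rw [← sq_abs, sq_le_one_iff₀ (abs_nonneg _)]
    exact (abs_re_le_norm (w - z₀)).trans hw
  have him : w.im ^ 2 ≤ (‖z₀‖ + 1) ^ 2 := by
    rw [← sq_abs]
    gcongr
    exact (abs_im_le_norm w).trans (by linarith [norm_le_norm_add_norm_sub' w z₀])
  have key : (s * w.im) ^ 2 - (x - s * w.re) ^ 2 ≤
      s ^ 2 * (1 + (‖z₀‖ + 1) ^ 2) - (x - s * z₀.re) ^ 2 / 2 := by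
    nlinarith [sq_nonneg (x - s * w.re - s * (w.re - z₀.re)),
      mul_le_mul_of_nonneg_left hre (sq_nonneg s), mul_le_mul_of_nonneg_left him (sq_nonneg s)]
  calc ((s * w.im) ^ 2 - (x - s * w.re) ^ 2) / c
      ≤ (s ^ 2 * (1 + (‖z₀‖ + 1) ^ 2) - (x - s * z₀.re) ^ 2 / 2) / c := by gcongr
    _ = _ := by field_simp; ring

lemma memLp_two_cexp_neg_sq_div {c : ℝ} (hc : 0 < c) (s : ℝ) (z : ℂ) :
    MemLp (fun x : ℝ => cexp (-((x : ℂ) - s * z) ^ 2 / c)) 2 volume :=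
  ((memLp_two_exp_neg_sq_div (by positivity : 0 < 2 * c) (s * z.re)).const_mul _).of_le
    (by fun_prop) (.of_forall fun x => by
      rw [norm_mul, Real.norm_of_nonneg (Real.exp_pos _).le,
        Real.norm_of_nonneg (Real.exp_pos _).le]
      exact norm_cexp_neg_sq_div_le hc s (z₀ := z) (by simp) x)

lemma hasDerivAt_cexp_neg_sq_div (c s x : ℝ) (w : ℂ) :
    HasDerivAt (fun w : ℂ => cexp (-((x : ℂ) - s * w) ^ 2 / c))
      (cexp (-((x : ℂ) - s * w) ^ 2 / c) * (2 * s * ((x : ℂ) - s * w) / c)) w := by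
  have h : HasDerivAt (fun w : ℂ => -((x : ℂ) - s * w) ^ 2 / c)
      (2 * s * ((x : ℂ) - s * w) / c) w :=
    ((((hasDerivAt_id' w).const_mul (s : ℂ)).const_sub (x : ℂ)).fun_pow 2).fun_neg.div_const
      (c : ℂ) |>.congr_deriv (by push_cast; ring)
  exact h.cexp

theorem hasDerivAt_integral_cexp_neg_sq_mul {c : ℝ} (hc : 0 < c) (s : ℝ) {ψ : ℝ → ℂ}
    (hψ : MemLp ψ 2 volume) (hxψ : MemLp (fun x : ℝ => (x : ℂ) * ψ x) 2 volume) (z₀ : ℂ) :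
    HasDerivAt (fun z => ∫ x : ℝ, cexp (-((x : ℂ) - s * z) ^ 2 / c) * ψ x)
      (-(2 * s ^ 2 / c) * z₀ * (∫ x : ℝ, cexp (-((x : ℂ) - s * z₀) ^ 2 / c) * ψ x) +
        (2 * s / c) * ∫ x : ℝ, cexp (-((x : ℂ) - s * z₀) ^ 2 / c) * ((x : ℂ) * ψ x)) z₀ := by
  set k : ℂ → ℝ → ℂ := fun z x => cexp (-((x : ℂ) - s * z) ^ 2 / c)
  set K := Real.exp (s ^ 2 * (1 + (‖z₀‖ + 1) ^ 2) / c)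
  set g : ℝ → ℝ := fun x => Real.exp (-(x - s * z₀.re) ^ 2 / (2 * c))
  have hk_meas (z : ℂ) : AEStronglyMeasurable (k z) volume :=
    (by fun_prop : Continuous (k z)).aestronglyMeasurable
  have hk_le {w : ℂ} (hw : w ∈ Metric.ball z₀ 1) (x : ℝ) : ‖k w x‖ ≤ K * g x :=
    norm_cexp_neg_sq_div_le hc s (mem_ball_iff_norm.1 hw).le x
  have hg : MemLp g 2 volume := memLp_two_exp_neg_sq_div (by positivity) _
  have hk_int {f : ℝ → ℂ} (hf : MemLp f 2 volume) : Integrable (fun x => k z₀ x * f x) volume :=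
    (memLp_two_cexp_neg_sq_div hc s z₀).integrable_mul hf
  set F' : ℂ → ℝ → ℂ := fun w x =>
    (2 * s / c) * (k w x * (x * ψ x)) - (2 * s ^ 2 / c * w) * (k w x * ψ x)
  have h_diff (x : ℝ) (w : ℂ) : HasDerivAt (fun w => k w x * ψ x) (F' w x) w :=
    (hasDerivAt_cexp_neg_sq_div c s x w).mul_const (ψ x) |>.congr_deriv (by simp only [F', k]; ring)
  set bound : ℝ → ℝ := fun x =>
    2 * |s| / c * (K * (g x * ‖(x : ℂ) * ψ x‖)) + 2 * s ^ 2 / c * (‖z₀‖ + 1) * (K * (g x * ‖ψ x‖))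
  have h_bound (x : ℝ) {w : ℂ} (hw : w ∈ Metric.ball z₀ 1) : ‖F' w x‖ ≤ bound x := by
    have hw' : ‖w‖ ≤ ‖z₀‖ + 1 := by
      linarith [norm_le_norm_add_norm_sub' w z₀, (mem_ball_iff_norm.1 hw).le]
    have hs : ‖(2 * s / c : ℂ)‖ = 2 * |s| / c := by
      norm_cast
      rw [Real.norm_eq_abs, abs_div, abs_mul, abs_two, abs_of_pos hc]
    have hs2 : ‖(2 * s ^ 2 / c : ℂ)‖ = 2 * s ^ 2 / c := by
      norm_cast
      exact Real.norm_of_nonneg (by positivity)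
    refine (norm_sub_le _ _).trans ?_
    simp only [bound, norm_mul, hs, hs2, ← mul_assoc K]
    gcongr <;> exact hk_le hw x
  have h_bound_int : Integrable bound volume :=
    (((hg.integrable_mul hxψ.norm).const_mul K).const_mul _).add
      (((hg.integrable_mul hψ.norm).const_mul K).const_mul _)
  obtain ⟨-, h⟩ := hasDerivAt_integral_of_dominated_loc_of_deriv_le
    (Metric.ball_mem_nhds z₀ one_pos) (.of_forall fun z => (hk_meas z).mul hψ.1) (hk_int hψ)
    ((((hk_meas z₀).mul hxψ.1).const_mul _).sub (((hk_meas z₀).mul hψ.1).const_mul _))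
    (.of_forall fun x w hw => h_bound x hw) h_bound_int (.of_forall fun x w _ => h_diff x w)
  refine h.congr_deriv ?_
  rw [integral_sub ((hk_int hxψ).const_mul _) ((hk_int hψ).const_mul _), integral_const_mul,
    integral_const_mul]
  ring

theorem rbfSB_derivative (γ : ℝ) (hγ : 0 < γ) (ψ : ℝ → ℂ)
    (hψ : MemLp ψ 2 volume)
    (hxψ : MemLp (fun x : ℝ => (x : ℂ) * ψ x) 2 volume) :
    ∀ z : ℂ,
      HasDerivAt (rbfSB γ ψ)
        (-(4 / (γ : ℂ) ^ 2) * z * rbfSB γ ψ z +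
          (2 * (Real.sqrt 2 : ℂ) / (γ : ℂ) ^ 2) * rbfSB γ (fun x => (x : ℂ) * ψ x) z) z := by
  intro z
  have h := (hasDerivAt_integral_cexp_neg_sq_mul (pow_pos hγ 2) (Real.sqrt 2) hψ hxψ z).const_mul
    (((2 / (Real.pi * γ ^ 2)) ^ ((1 : ℝ) / 4) : ℝ) : ℂ)
  simp only [Complex.ofReal_pow] at h
  have hsqrt : ((Real.sqrt 2 : ℝ) : ℂ) ^ 2 = 2 := by
    rw [← Complex.ofReal_pow, Real.sq_sqrt zero_le_two, Complex.ofReal_ofNat]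
  refine h.congr_deriv ?_
  simp only [rbfSB, hsqrt]
  ring
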